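/- arXiv:1703.05968 — 2 statements merged into one kernel-verified Lean document; each statement's English description precedes it below -/
import Mathlib

section
/- Let k be a field and C a small k-linear category, and let Mat(C) be its additive closure (matrix category): objects are finite tuples (x_1, …, x_m) of objects of C and morphisms are matrices of morphisms of C. The k-linear map Tr C → Tr Mat(C) induced by the canonical functor sending x to the one-entry tuple (x) is bijective, and its inverse sends the trace class of an endomorphism matrix (f_{k,l})_{k,l} of (x_1, …, x_m) to the sum Σ_k [f_{k,k}] of the trace classes of its diagonal entries. -/
/-!
Trace classes are invariant under cyclic permutation, so a decomposition `𝟙 = Σ pᵢ ≫ qᵢ` of an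
identity splits `[f]` as `Σ [qᵢ ≫ f ≫ pᵢ]`; for the coordinate projections and inclusions of a
matrix object this reads `[f] = Σ [f i i]`. Conversely, the diagonal sum `f ↦ Σ [f i i]` kills
commutators because `Σᵢⱼ [f i j ≫ g j i]` is symmetric in `f` and `g`, so it descends to
`Tr Mat(C)` and inverts the map induced by the embedding `C ⥤ Mat(C)`.
-/

open CategoryTheory CategoryTheory.Limits

attribute [local instance] Classical.propDecidable

noncomputable section

universe u

variable (k : Type) [Field k]

section MatLinear

variable {C : Type} [SmallCategory C] [Preadditive C] [CategoryTheory.Linear k C]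

instance matHomModule (M N : Mat_ C) : Module k (M ⟶ N) :=
  inferInstanceAs <| Module k <| ∀ (i : M.ι) (j : N.ι), M.X i ⟶ N.X j

@[simp] lemma mat_smul_apply {M N : Mat_ C} (c : k) (f : M ⟶ N) (i : M.ι) (j : N.ι) :
    (c • f) i j = c • f i j := rfl

instance matLinear : CategoryTheory.Linear k (Mat_ C) where
  homModule M N := matHomModule k M N
  smul_comp M N K c f g := by
    ext i j
    simp [Mat_.comp_apply, Finset.smul_sum, CategoryTheory.Linear.smul_comp]
  comp_smul M N K f c g := by
    ext i j
    simp [Mat_.comp_apply, Finset.smul_sum, CategoryTheory.Linear.comp_smul]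

end MatLinear

open scoped DirectSum

/-- The subspace of `⊕_{x} End(x)` spanned by the commutators `f ∘ g − g ∘ f`. -/
def traceRel (C : Type u) [Category.{0} C] [Preadditive C] [CategoryTheory.Linear k C] :
    Submodule k (⨁ x : C, (x ⟶ x)) :=
  Submodule.span k
    {u | ∃ (x y : C) (f : x ⟶ y) (g : y ⟶ x),
      u = DirectSum.of (fun z : C => z ⟶ z) x (f ≫ g) -
            DirectSum.of (fun z : C => z ⟶ z) y (g ≫ f)}

/-- The trace of a `k`-linear category: `Tr C = (⊕_{x} End(x)) / span_k{f∘g − g∘f}`. -/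
abbrev Tr (C : Type u) [Category.{0} C] [Preadditive C] [CategoryTheory.Linear k C] :=
  (⨁ x : C, (x ⟶ x)) ⧸ traceRel k C

/-- The trace class `[f] ∈ Tr C` of an endomorphism `f : x ⟶ x`. -/
def traceClass {C : Type u} [Category.{0} C] [Preadditive C] [CategoryTheory.Linear k C]
    {x : C} (f : x ⟶ x) : Tr k C :=
  Submodule.Quotient.mk (DirectSum.of (fun z : C => z ⟶ z) x f)

section Trace

variable {C : Type u} [Category.{0} C] [Preadditive C] [CategoryTheory.Linear k C]

def traceClassₗ (x : C) : (x ⟶ x) →ₗ[k] Tr k C :=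
  (traceRel k C).mkQ ∘ₗ DirectSum.lof k C (fun z : C => z ⟶ z) x

@[simp] lemma traceClassₗ_apply {x : C} (f : x ⟶ x) : traceClassₗ k x f = traceClass k f := rfl

lemma traceClass_add {x : C} (f g : x ⟶ x) :
    traceClass k (f + g) = traceClass k f + traceClass k g :=
  map_add (traceClassₗ k x) f g

lemma traceClass_smul {x : C} (c : k) (f : x ⟶ x) :
    traceClass k (c • f) = c • traceClass k f :=
  map_smul (traceClassₗ k x) c f

lemma traceClass_sum {ι : Type*} (s : Finset ι) {x : C} (f : ι → (x ⟶ x)) :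
    traceClass k (∑ i ∈ s, f i) = ∑ i ∈ s, traceClass k (f i) :=
  map_sum (traceClassₗ k x) f s

lemma traceClass_comp_comm {x y : C} (f : x ⟶ y) (g : y ⟶ x) :
    traceClass k (f ≫ g) = traceClass k (g ≫ f) :=
  (Submodule.Quotient.eq _).2 (Submodule.subset_span ⟨x, y, f, g, rfl⟩)

lemma traceClass_eq_sum_of_sum_comp_eq_id {ι : Type*} (s : Finset ι) {x : C} {y : ι → C}
    (p : ∀ i, x ⟶ y i) (q : ∀ i, y i ⟶ x) (hpq : ∑ i ∈ s, p i ≫ q i = 𝟙 x) (f : x ⟶ x) :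
    traceClass k f = ∑ i ∈ s, traceClass k (q i ≫ f ≫ p i) := by
  conv_lhs => rw [← Category.comp_id f, ← hpq, Preadditive.comp_sum, traceClass_sum]
  refine Finset.sum_congr rfl fun i _ => ?_
  rw [← Category.assoc, traceClass_comp_comm]

namespace Tr

variable {M : Type*} [AddCommGroup M] [Module k M]

def lift (φ : ∀ x : C, (x ⟶ x) →ₗ[k] M)
    (hφ : ∀ (x y : C) (f : x ⟶ y) (g : y ⟶ x), φ x (f ≫ g) = φ y (g ≫ f)) :
    Tr k C →ₗ[k] M :=
  (traceRel k C).liftQ (DirectSum.toModule k C M φ) <| by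
    rw [traceRel, Submodule.span_le]
    rintro _ ⟨x, y, f, g, rfl⟩
    simp [← DirectSum.lof_eq_of k, hφ]

@[simp] lemma lift_traceClass (φ : ∀ x : C, (x ⟶ x) →ₗ[k] M)
    (hφ : ∀ (x y : C) (f : x ⟶ y) (g : y ⟶ x), φ x (f ≫ g) = φ y (g ≫ f))
    {x : C} (f : x ⟶ x) : lift k φ hφ (traceClass k f) = φ x f := by
  rw [lift, traceClass, Submodule.liftQ_apply, ← DirectSum.lof_eq_of k]
  exact DirectSum.toModule_lof (φ := φ) k x f

lemma hom_ext {F G : Tr k C →ₗ[k] M}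
    (h : ∀ (x : C) (f : x ⟶ x), F (traceClass k f) = G (traceClass k f)) : F = G :=
  Submodule.linearMap_qext _ <| DirectSum.linearMap_ext k fun x => LinearMap.ext (h x)

variable {D : Type*} [Category.{0} D] [Preadditive D] [CategoryTheory.Linear k D]

def map (F : C ⥤ D) [F.Additive] [F.Linear k] : Tr k C →ₗ[k] Tr k D :=
  lift k (fun x => traceClassₗ k (F.obj x) ∘ₗ F.mapLinearMap k) fun x y f g => by
    simp [traceClass_comp_comm]

@[simp] lemma map_traceClass (F : C ⥤ D) [F.Additive] [F.Linear k] {x : C} (f : x ⟶ x) :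
    map k F (traceClass k f) = traceClass k (F.map f) :=
  lift_traceClass k _ _ f

end Tr

end Trace

namespace CategoryTheory.Mat_

section

variable {C : Type*} [Category* C] [Preadditive C]

lemma sum_apply {M N : Mat_ C} {ι : Type*} (s : Finset ι) (f : ι → (M ⟶ N)) (i : M.ι) (j : N.ι) :
    (∑ x ∈ s, f x) i j = ∑ x ∈ s, f x i j := by
  classical
  induction s using Finset.induction_on with
  | empty => rfl
  | insert a s ha ih => rw [Finset.sum_insert ha, Finset.sum_insert ha, add_apply, ih]

instance (X : C) : Unique ((embedding C).obj X).ι :=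
  inferInstanceAs (Unique PUnit)

def incl (M : Mat_ C) (i : M.ι) : (embedding C).obj (M.X i) ⟶ M :=
  fun _ j => (𝟙 M : M ⟶ M) i j

def proj (M : Mat_ C) (i : M.ι) : M ⟶ (embedding C).obj (M.X i) :=
  fun j _ => (𝟙 M : M ⟶ M) j i

lemma sum_proj_comp_incl (M : Mat_ C) : ∑ i, proj M i ≫ incl M i = 𝟙 M := by
  ext a b
  calc (∑ i, proj M i ≫ incl M i) a b = ∑ i, (𝟙 M : M ⟶ M) a i ≫ (𝟙 M : M ⟶ M) i b := by
        simp only [sum_apply, comp_apply, Fintype.sum_unique]; rfl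
    _ = (𝟙 M ≫ 𝟙 M : M ⟶ M) a b := (comp_apply _ _ _ _).symm
    _ = (𝟙 M : M ⟶ M) a b := by rw [Category.comp_id]

lemma incl_comp_comp_proj (M : Mat_ C) (f : M ⟶ M) (i : M.ι) :
    incl M i ≫ f ≫ proj M i = (embedding C).map (f i i) := by
  ext ⟨⟩ ⟨⟩
  change (𝟙 M ≫ f ≫ 𝟙 M) i i = f i i
  rw [Category.id_comp, Category.comp_id]

end

variable {C : Type} [SmallCategory C] [Preadditive C] [CategoryTheory.Linear k C]

instance embedding_linear : (embedding C).Linear k where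
  map_smul _ _ := rfl

def traceDiag (M : Mat_ C) : (M ⟶ M) →ₗ[k] Tr k C where
  toFun f := ∑ i, traceClass k (f i i)
  map_add' f g := by simp only [add_apply, traceClass_add, Finset.sum_add_distrib]
  map_smul' c f := by
    simp only [mat_smul_apply, traceClass_smul, RingHom.id_apply, Finset.smul_sum]

@[simp] lemma traceDiag_apply {M : Mat_ C} (f : M ⟶ M) :
    traceDiag k M f = ∑ i, traceClass k (f i i) := rfl

lemma traceDiag_comp_comm (M N : Mat_ C) (f : M ⟶ N) (g : N ⟶ M) :
    traceDiag k M (f ≫ g) = traceDiag k N (g ≫ f) := by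
  simp only [traceDiag_apply, comp_apply, traceClass_sum]
  rw [Finset.sum_comm]
  simp only [traceClass_comp_comm]

lemma traceDiag_embedding_map {x : C} (f : x ⟶ x) :
    traceDiag k _ ((embedding C).map f) = traceClass k f := by
  rw [traceDiag_apply, Fintype.sum_unique]
  rfl

lemma traceClass_eq_sum_diag (M : Mat_ C) (f : M ⟶ M) :
    traceClass k f = ∑ i, traceClass k ((embedding C).map (f i i)) := by
  simp only [traceClass_eq_sum_of_sum_comp_eq_id k _ _ _ (sum_proj_comp_incl M) f,
    incl_comp_comp_proj]

end CategoryTheory.Mat_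

/-- The `k`-linear map `Tr C → Tr Mat(C)` induced by the canonical functor `C ⥤ Mat_ C`
(the unique linear map with `[f] ↦ [embedding.map f]`) is bijective, and its inverse sends
the trace class of an endomorphism matrix `(f_{k,l})` to the sum `Σ_k [f_{k,k}]` of the
trace classes of its diagonal entries. -/
theorem trace_matrixCategory_bijective (C : Type) [SmallCategory C] [Preadditive C]
    [CategoryTheory.Linear k C] :
    ∃ T : Tr k C →ₗ[k] Tr k (Mat_ C),
      (∀ (x : C) (f : x ⟶ x), T (traceClass k f) = traceClass k ((Mat_.embedding C).map f)) ∧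
        Function.Bijective T ∧
        ∀ (M : Mat_ C) (f : M ⟶ M),
          T (∑ i : M.ι, traceClass k (f i i)) = traceClass k f := by
  let T := Tr.map k (Mat_.embedding C)
  let S := Tr.lift k (Mat_.traceDiag k (C := C)) (Mat_.traceDiag_comp_comm k)
  have hT (M : Mat_ C) (f : M ⟶ M) : T (∑ i, traceClass k (f i i)) = traceClass k f := by
    simp [T, Mat_.traceClass_eq_sum_diag k M f]
  have hST : S ∘ₗ T = LinearMap.id := Tr.hom_ext k fun x f => by
    simp only [S, T, LinearMap.comp_apply, Tr.map_traceClass, Tr.lift_traceClass,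
      Mat_.traceDiag_embedding_map, LinearMap.id_apply]
  have hTS : T ∘ₗ S = LinearMap.id := Tr.hom_ext k fun M f => by simp [S, hT]
  exact ⟨T, fun x f => Tr.map_traceClass k _ f,
    Function.bijective_iff_has_inverse.2 ⟨S, LinearMap.congr_fun hST, LinearMap.congr_fun hTS⟩, hT⟩

end
end

section
/- Let ν be an n-composition of N with ν_i > 0 for some i ∈ {1,…,n−1}. Then the ring P_{ν−α_i,ν} is a free module over P_ν with basis {X_{k_i}^m : 0 ≤ m ≤ ν_i − 1}, and a free module over P_{ν−α_i} with basis {X_{k_i}^m : 0 ≤ m ≤ ν_{i+1}}. -/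
open MvPolynomial Finset

set_option synthInstance.maxHeartbeats 1000000
set_option maxHeartbeats 2000000

noncomputable section

/-- The elementary symmetric polynomial of degree `l` in the variables indexed by `S`. -/
def esymIn {σ : Type*} [DecidableEq σ] (S : Finset σ) (l : ℕ) : MvPolynomial σ ℂ :=
  ∑ T ∈ S.powersetCard l, ∏ a ∈ T, X a

/-- The complete homogeneous symmetric polynomial of degree `m` in the variables indexed
by `S`. -/
def hsymIn {σ : Type*} [DecidableEq σ] (S : Finset σ) (m : ℕ) : MvPolynomial σ ℂ :=
  ∑ t ∈ S.sym m, (t.1.map X).prod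

/-- Complete homogeneous symmetric polynomial with integer degree; zero in negative degree. -/
def hsymZ {σ : Type*} [DecidableEq σ] (S : Finset σ) (d : ℤ) : MvPolynomial σ ℂ :=
  if 0 ≤ d then hsymIn S d.toNat else 0

/-- The power sum symmetric polynomial of degree `j` in the variables indexed by `S`. -/
def psymIn {σ : Type*} (S : Finset σ) (j : ℕ) : MvPolynomial σ ℂ :=
  ∑ a ∈ S, X a ^ j

variable (n N : ℕ)

/-- The partial sum `ν_0 + ⋯ + ν_{t−1}` of a composition `ν`. -/
def kpart (ν : Fin n → ℕ) (t : ℕ) : ℕ :=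
  ∑ j ∈ Finset.univ.filter fun j : Fin n => (j : ℕ) < t, ν j

/-- The `i`-th block of variables `Ω_i = {a | k_{i−1} ≤ a < k_i}` (0-based). -/
def blockOf (ν : Fin n → ℕ) (i : Fin n) : Finset (Fin N) :=
  Finset.univ.filter fun a : Fin N =>
    kpart n ν (i : ℕ) ≤ (a : ℕ) ∧ (a : ℕ) < kpart n ν ((i : ℕ) + 1)

/-- A permutation of the variables preserving each block of `ν`. -/
def BlockPreserving (ν : Fin n → ℕ) (σp : Equiv.Perm (Fin N)) : Prop :=
  ∀ i : Fin n, ∀ a ∈ blockOf n N ν i, σp a ∈ blockOf n N ν i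

/-- `P_ν`: the subalgebra of polynomials invariant under the Young subgroup `S_ν`. -/
def Psub (ν : Fin n → ℕ) : Subalgebra ℂ (MvPolynomial (Fin N) ℂ) where
  carrier := {p | ∀ σp : Equiv.Perm (Fin N), BlockPreserving n N ν σp → rename σp p = p}
  mul_mem' := fun hp hq σp hσ => by rw [map_mul, hp σp hσ, hq σp hσ]
  add_mem' := fun hp hq σp hσ => by rw [map_add, hp σp hσ, hq σp hσ]
  one_mem' := fun σp hσ => by simp
  zero_mem' := fun σp hσ => by simp
  algebraMap_mem' := fun c σp hσ => by simp [MvPolynomial.algebraMap_eq]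

/-- The composition `ν − α_i` (for `i' = i+1`). -/
def subAlpha (ν : Fin n → ℕ) (i i' : Fin n) : Fin n → ℕ :=
  Function.update (Function.update ν i (ν i - 1)) i' (ν i' + 1)

/-- The composition `ν + α_i` (for `i' = i+1`). -/
def addAlpha (ν : Fin n → ℕ) (i i' : Fin n) : Fin n → ℕ :=
  Function.update (Function.update ν i (ν i + 1)) i' (ν i' - 1)

open Fin.NatCast in
/-- The variable `X_{k_i}` (the last variable of the `i`-th block), 0-based. -/
def varF [NeZero N] (ν : Fin n → ℕ) (i : Fin n) : Fin N :=
  ((kpart n ν ((i : ℕ) + 1) - 1 : ℕ) : Fin N)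

open Fin.NatCast in
/-- The variable `X_{k_i + 1}` (the first variable of the `(i+1)`-st block), 0-based. -/
def varE [NeZero N] (ν : Fin n → ℕ) (i : Fin n) : Fin N :=
  ((kpart n ν ((i : ℕ) + 1) : ℕ) : Fin N)

/-- The value of `F_{i,j}` on the basis element `X_{k_i}^m`:
`Σ_{l=0}^{ν_i−1} (−1)^l e_l(ν−α_i;i) h_{m+j+ν_i−ν_{i+1}−1−l}(ν−α_i;i+1)`. -/
def Fval (ν : Fin n → ℕ) (i i' : Fin n) (j m : ℕ) : MvPolynomial (Fin N) ℂ :=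
  ∑ l ∈ Finset.range (ν i),
    (-1 : MvPolynomial (Fin N) ℂ) ^ l * esymIn (blockOf n N (subAlpha n ν i i') i) l *
      hsymZ (blockOf n N (subAlpha n ν i i') i')
        ((m : ℤ) + (j : ℤ) + (ν i : ℤ) - (ν i' : ℤ) - 1 - (l : ℤ))

/-- The value of `E_{i,j}` on the basis element `X_{k_i+1}^m`:
`Σ_{l=0}^{ν_{i+1}−1} (−1)^l e_l(ν+α_i;i+1) h_{m+j+ν_{i+1}−ν_i−1−l}(ν+α_i;i)`. -/
def Eval (ν : Fin n → ℕ) (i i' : Fin n) (j m : ℕ) : MvPolynomial (Fin N) ℂ :=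
  ∑ l ∈ Finset.range (ν i'),
    (-1 : MvPolynomial (Fin N) ℂ) ^ l * esymIn (blockOf n N (addAlpha n ν i i') i') l *
      hsymZ (blockOf n N (addAlpha n ν i i') i)
        ((m : ℤ) + (j : ℤ) + (ν i' : ℤ) - (ν i : ℤ) - 1 - (l : ℤ))

/-- `F` is (the restriction to `P_ν` of) the unique `P_{ν−α_i}`-linear map on
`P_{ν−α_i,ν}` sending the basis element `X_{k_i}^m` (`0 ≤ m ≤ ν_{i+1}`) to
`Σ_{l=0}^{ν_i−1} (−1)^l e_l(ν−α_i;i) h_{m+j+ν_i−ν_{i+1}−1−l}(ν−α_i;i+1)`;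
when `ν_i = 0` the target is the zero ring and `F` is the zero map. -/
def FSpec [NeZero N] (ν : Fin n → ℕ) (i i' : Fin n) (j : ℕ)
    (F : MvPolynomial (Fin N) ℂ → MvPolynomial (Fin N) ℂ) : Prop :=
  F 0 = 0 ∧
    (ν i = 0 → ∀ p ∈ Psub n N ν, F p = 0) ∧
    (0 < ν i → ∀ (p : MvPolynomial (Fin N) ℂ) (c : ℕ → MvPolynomial (Fin N) ℂ),
      p ∈ Psub n N ν → (∀ m, c m ∈ Psub n N (subAlpha n ν i i')) →
      p = ∑ m ∈ Finset.range (ν i' + 1), c m * X (varF n N ν i) ^ m →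
      F p = ∑ m ∈ Finset.range (ν i' + 1), c m * Fval n N ν i i' j m)

/-- `E` is (the restriction to `P_ν` of) the unique `P_{ν+α_i}`-linear map on
`P_{ν+α_i,ν}` sending the basis element `X_{k_i+1}^m` (`0 ≤ m ≤ ν_{i+1}−1`) to
`Σ_{l=0}^{ν_{i+1}−1} (−1)^l e_l(ν+α_i;i+1) h_{m+j+ν_{i+1}−ν_i−1−l}(ν+α_i;i)`;
when `ν_{i+1} = 0` the target is the zero ring and `E` is the zero map. -/
def ESpec [NeZero N] (ν : Fin n → ℕ) (i i' : Fin n) (j : ℕ)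
    (E : MvPolynomial (Fin N) ℂ → MvPolynomial (Fin N) ℂ) : Prop :=
  E 0 = 0 ∧
    (ν i' = 0 → ∀ p ∈ Psub n N ν, E p = 0) ∧
    (0 < ν i' → ∀ (p : MvPolynomial (Fin N) ℂ) (c : ℕ → MvPolynomial (Fin N) ℂ),
      p ∈ Psub n N ν → (∀ m, c m ∈ Psub n N (addAlpha n ν i i')) →
      p = ∑ m ∈ Finset.range (ν i'), c m * X (varE n N ν i) ^ m →
      E p = ∑ m ∈ Finset.range (ν i'), c m * Eval n N ν i i' j m)

/-- A family `(ν, i, j) ↦ F_{i,j} : P_ν → P_{ν−α_i}` of operators, each satisfying its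
defining specification (at every `n`-composition of `N`). -/
def FFam [NeZero N]
    (Ff : (Fin n → ℕ) → Fin n → ℕ → MvPolynomial (Fin N) ℂ → MvPolynomial (Fin N) ℂ) : Prop :=
  ∀ (ν : Fin n → ℕ) (i : Fin n) (hi : (i : ℕ) + 1 < n) (j : ℕ),
    Ff ν i j 0 = 0 ∧ ((∑ a, ν a) = N → FSpec n N ν i ⟨(i : ℕ) + 1, hi⟩ j (Ff ν i j))

/-- A family `(ν, i, j) ↦ E_{i,j} : P_ν → P_{ν+α_i}` of operators, each satisfying its
defining specification (at every `n`-composition of `N`). -/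
def EFam [NeZero N]
    (Ef : (Fin n → ℕ) → Fin n → ℕ → MvPolynomial (Fin N) ℂ → MvPolynomial (Fin N) ℂ) : Prop :=
  ∀ (ν : Fin n → ℕ) (i : Fin n) (hi : (i : ℕ) + 1 < n) (j : ℕ),
    Ef ν i j 0 = 0 ∧ ((∑ a, ν a) = N → ESpec n N ν i ⟨(i : ℕ) + 1, hi⟩ j (Ef ν i j))


/-- The refined `(n+1)`-composition `(ν_1, …, ν_{i−1}, ν_i − 1, 1, ν_{i+1}, …, ν_n)`,
whose invariant ring is `P_{ν−α_i,ν}`. -/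
def refineMinus (ν : Fin n → ℕ) (i : Fin n) : Fin (n + 1) → ℕ :=
  Fin.insertNth ⟨(i : ℕ) + 1, Nat.succ_lt_succ i.isLt⟩ 1 (Function.update ν i (ν i - 1))


/-!
Both statements are instances of one fact. Let `G` be a monoid of permutations of the variables
that contains every transposition of a finite set `Ω` of `d` variables and maps `Ω` into itself,
and let `x ∈ Ω`. Then the powers `X x ^ m`, `m < d`, are a basis of the invariants of the
stabiliser of `x` in `G` over the invariants of `G`. Independence: applying the transpositions
`(x a)`, `a ∈ Ω`, to a relation `∑ c_m X_x^m = 0` gives a Vandermonde system. Spanning: for `p`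
fixed by the stabiliser, `G` permutes the conjugates `p_a = (x a) p` as it permutes the variables
`X_a`; solving `∑_m c_m X_a^m = p_a` by Cramer's rule, every numerator is alternating in the
variables of `Ω`, hence divisible by the Vandermonde determinant, and the quotients are
`G`-invariant.

For `P_ν` take `Ω` the `i`-th block of `ν`, for `P_{ν−α_i}` the `(i+1)`-st block of `ν − α_i`;
both contain `x = X_{k_i}`. A permutation preserves the blocks of a composition iff it preserves
the initial segments `{a < k_t}`; the cut points of the refined composition are those of `ν`
together with `k_i − 1`, and those of `ν − α_i` together with `k_i`, while preserving the
segments below `c` and below `c + 1` amounts to fixing the variable `c`. So in both cases the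
Young subgroup of the refined composition is the stabiliser of `x`.
-/

theorem Matrix.map_det_eq_sign_mul {S F ι : Type*} [CommRing S] [FunLike F S S]
    [RingHomClass F S S] [Fintype ι] [DecidableEq ι] (φ : F) {M : Matrix ι ι S}
    {π : Equiv.Perm ι} (h : ∀ r c, φ (M r c) = M (π r) c) :
    φ M.det = ((Equiv.Perm.sign π : ℤ) : S) * M.det := by
  have hM : (φ : S →+* S).mapMatrix M = M.submatrix π id := by ext r c; exact h r c
  rw [← RingHom.coe_coe φ, RingHom.map_det, hM, Matrix.det_permute]

theorem Function.Injective.exists_perm_apply_eq {ι α : Type*} [Finite ι] {v : ι → α}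
    (hv : Function.Injective v) {g : α → α} (hg : Function.Injective g)
    (hmaps : ∀ r, ∃ s, v s = g (v r)) : ∃ π : Equiv.Perm ι, ∀ r, v (π r) = g (v r) := by
  choose f hf using hmaps
  have hf_inj : Function.Injective f := fun r s h => hv (hg (by rw [← hf, ← hf, h]))
  exact ⟨Equiv.ofBijective f (Finite.injective_iff_bijective.mp hf_inj), hf⟩

theorem Equiv.Perm.apply_mem_iff_of_mapsTo {α : Type*} {s : Finset α} {g : Equiv.Perm α}
    (h : ∀ a ∈ s, g a ∈ s) (a : α) : g a ∈ s ↔ a ∈ s := by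
  have hs : s.map g.toEmbedding = s := Finset.map_eq_of_subset fun b hb => by
    obtain ⟨a, ha, rfl⟩ := Finset.mem_map.mp hb
    exact h a ha
  conv_lhs => rw [← hs]
  rw [Finset.mem_map_equiv, Equiv.symm_apply_apply]

theorem Set.insert_range_update {α β : Type*} [DecidableEq α] (f : α → β) (a : α) (b : β) :
    insert (f a) (Set.range (Function.update f a b)) = insert b (Set.range f) := by
  ext c
  simp only [Set.mem_insert_iff, Set.mem_range]
  constructor
  · rintro (rfl | ⟨t, rfl⟩)
    · exact Or.inr ⟨a, rfl⟩
    · rcases eq_or_ne t a with rfl | ht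
      · simp
      · exact Or.inr ⟨t, (Function.update_of_ne ht b f).symm⟩
  · rintro (rfl | ⟨t, rfl⟩)
    · exact Or.inr ⟨a, by simp⟩
    · rcases eq_or_ne t a with rfl | ht
      · simp
      · exact Or.inr ⟨t, Function.update_of_ne ht b f⟩

namespace MvPolynomial

section XSubX

variable {R σ : Type*} [CommRing R] [DecidableEq σ]

theorem X_sub_X_dvd_iff {a b : σ} {f : MvPolynomial σ R} :
    X a - X b ∣ f ↔ rename (Function.update id a b) f = 0 := by
  set g := Function.update id a b
  have hg : ∀ c, X c - X (g c) = if c = a then (X a - X b : MvPolynomial σ R) else 0 := by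
    intro c
    split_ifs with hc <;> simp [g, hc]
  constructor
  · rintro ⟨q, rfl⟩
    have hga : g a = b := Function.update_self ..
    have hgb : g b = b := by by_cases hb : b = a <;> simp [g, hb]
    simp [hga, hgb]
  · intro hf
    suffices ∀ f : MvPolynomial σ R, X a - X b ∣ f - rename g f by simpa [hf] using this f
    intro f
    induction f using MvPolynomial.induction_on with
    | C r => simp
    | add p q hp hq => simpa [add_sub_add_comm] using dvd_add hp hq
    | mul_X p c hp =>
      have : p * X c - rename g (p * X c) =
          (p - rename g p) * X c + rename g p * (X c - X (g c)) := by
        simp only [map_mul, rename_X]; ring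
      rw [this, hg]
      split_ifs
      · exact dvd_add (hp.mul_right _) (dvd_mul_left _ _)
      · simpa using hp.mul_right _

theorem prime_X_sub_X [IsDomain R] {a b : σ} (hab : a ≠ b) :
    Prime (X a - X b : MvPolynomial σ R) := by
  have hne : (X a - X b : MvPolynomial σ R) ≠ 0 := sub_ne_zero.mpr fun h => hab (X_injective h)
  rw [← Ideal.span_singleton_prime hne]
  have hker : Ideal.span {X a - X b} =
      RingHom.ker (rename (R := R) (Function.update id a b)).toRingHom := by
    ext f
    simp [Ideal.mem_span_singleton, X_sub_X_dvd_iff]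
  rw [hker]
  exact RingHom.ker_isPrime _

theorem X_sub_X_dvd_of_rename_swap_eq_neg [IsDomain R] [CharZero R] {a b : σ}
    {f : MvPolynomial σ R} (hf : rename (Equiv.swap a b) f = -f) : X a - X b ∣ f := by
  have hcomp : Function.update id a b ∘ Equiv.swap a b = Function.update id a b := by
    ext c
    by_cases hca : c = a <;> by_cases hcb : c = b <;>
      simp_all [Equiv.swap_apply_of_ne_of_ne, Function.update_apply]
  have := congrArg (rename (Function.update id a b)) hf
  rw [rename_rename, hcomp, map_neg, eq_neg_iff_add_eq_zero, add_self_eq_zero] at this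
  exact X_sub_X_dvd_iff.mpr this

theorem isRelPrime_X_sub_X [IsDomain R] {a b c d : σ} (hab : a ≠ b) (hcd : c ≠ d)
    (h₁ : ¬(c = a ∧ d = b)) (h₂ : ¬(c = b ∧ d = a)) :
    IsRelPrime (X a - X b : MvPolynomial σ R) (X c - X d) := by
  rw [(prime_X_sub_X hab).irreducible.isRelPrime_iff_not_dvd, X_sub_X_dvd_iff]
  simp only [map_sub, rename_X, sub_eq_zero]
  intro h
  have := X_injective h
  by_cases hca : c = a <;> by_cases hda : d = a <;> simp_all

end XSubX

theorem det_vandermonde_X_dvd {K σ : Type*} [Field K] [CharZero K] [DecidableEq σ] {d : ℕ}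
    {v : Fin d → σ} (hv : Function.Injective v) {f : MvPolynomial σ K}
    (hf : ∀ r s, r < s → rename (Equiv.swap (v r) (v s)) f = -f) :
    (Matrix.vandermonde fun r => (X (v r) : MvPolynomial σ K)).det ∣ f := by
  rw [Matrix.det_vandermonde, Finset.prod_sigma']
  refine Finset.prod_dvd_of_isRelPrime (fun p hp q hq hpq => ?_) fun p hp => ?_
  · simp only [coe_sigma, Set.mem_sigma_iff, coe_univ, Set.mem_univ, coe_Ioi, Set.mem_Ioi,
      true_and] at hp hq
    refine isRelPrime_X_sub_X (hv.ne hp.ne') (hv.ne hq.ne') (fun h => hpq ?_) fun h => ?_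
    · exact Sigma.ext (hv h.2).symm (heq_of_eq (hv h.1).symm)
    · exact lt_irrefl _ (((hp.trans_eq (hv h.2).symm).trans hq).trans_eq (hv h.1))
  · rw [Finset.mem_sigma, Finset.mem_Ioi] at hp
    exact X_sub_X_dvd_of_rename_swap_eq_neg (by rw [Equiv.swap_comm]; exact hf _ _ hp.2)

section Vandermonde

variable {R σ : Type*} [CommRing R] {d : ℕ} {v : Fin d → σ} {g : Equiv.Perm σ}
  {π : Equiv.Perm (Fin d)}

theorem rename_vandermonde_X_apply (hπ : ∀ r, v (π r) = g (v r)) (r c : Fin d) :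
    rename g (Matrix.vandermonde (fun r => (X (v r) : MvPolynomial σ R)) r c) =
      Matrix.vandermonde (fun r => X (v r)) (π r) c := by
  simp [Matrix.vandermonde_apply, hπ]

theorem rename_det_vandermonde_X (hπ : ∀ r, v (π r) = g (v r)) :
    rename g (Matrix.vandermonde fun r => (X (v r) : MvPolynomial σ R)).det =
      ((Equiv.Perm.sign π : ℤ) : MvPolynomial σ R) * (Matrix.vandermonde fun r => X (v r)).det :=
  Matrix.map_det_eq_sign_mul (rename g) (rename_vandermonde_X_apply hπ)

theorem rename_cramer_vandermonde_X (hπ : ∀ r, v (π r) = g (v r))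
    {b : Fin d → MvPolynomial σ R} (hb : ∀ r, rename g (b r) = b (π r)) (m : Fin d) :
    rename g ((Matrix.vandermonde fun r => X (v r)).cramer b m) =
      ((Equiv.Perm.sign π : ℤ) : MvPolynomial σ R) *
        (Matrix.vandermonde fun r => X (v r)).cramer b m := by
  simp only [Matrix.cramer_apply]
  refine Matrix.map_det_eq_sign_mul (rename g) fun r c => ?_
  rw [Matrix.updateCol_apply, Matrix.updateCol_apply]
  split_ifs
  · exact hb r
  · exact rename_vandermonde_X_apply hπ r c

end Vandermonde

section Invariants

variable {R σ : Type*} [CommRing R]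

variable (R) in
def invariants (G : Submonoid (Equiv.Perm σ)) : Subalgebra R (MvPolynomial σ R) where
  carrier := {p | ∀ g ∈ G, rename g p = p}
  mul_mem' hp hq g hg := by rw [map_mul, hp g hg, hq g hg]
  add_mem' hp hq g hg := by rw [map_add, hp g hg, hq g hg]
  algebraMap_mem' c g _ := rename_C g c

theorem invariants_antitone {G H : Submonoid (Equiv.Perm σ)} (h : G ≤ H) :
    invariants R H ≤ invariants R G :=
  fun _ hp g hg => hp g (h hg)

variable [DecidableEq σ] {G : Submonoid (Equiv.Perm σ)} {Ω : Finset σ} {x : σ} {d : ℕ}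

theorem linearIndependent_X_pow [IsDomain R] (hx : x ∈ Ω) (hd : #Ω = d)
    (hswap : ∀ a ∈ Ω, ∀ b ∈ Ω, Equiv.swap a b ∈ G) :
    LinearIndependent (invariants R G) fun m : Fin d => (X x : MvPolynomial σ R) ^ (m : ℕ) := by
  let e := Ω.equivFinOfCardEq hd
  let v : Fin d → σ := fun r => e.symm r
  have hv : Function.Injective v := Subtype.val_injective.comp e.symm.injective
  rw [Fintype.linearIndependent_iff]
  intro c hc
  set V := Matrix.vandermonde fun r => (X (v r) : MvPolynomial σ R)
  have hV : V.mulVec (fun m => c m) = 0 := by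
    funext r
    have hinv (m : Fin d) : rename (Equiv.swap x (v r)) (c m : MvPolynomial σ R) = c m :=
      (c m).2 _ (hswap x hx (v r) (e.symm r).2)
    have := congrArg (rename (Equiv.swap x (v r))) hc
    simp only [map_sum, map_zero, Subalgebra.smul_def, smul_eq_mul, map_mul, map_pow, rename_X,
      Equiv.swap_apply_left, hinv] at this
    simpa [V, Matrix.mulVec, dotProduct, mul_comm] using this
  have hdet : V.det ≠ 0 :=
    Matrix.det_vandermonde_ne_zero_iff.mpr (X_injective.comp hv)
  intro m
  exact Subtype.ext (congrFun (Matrix.eq_zero_of_mulVec_eq_zero hdet hV) m)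

theorem rename_rename_swap_of_mem_invariants {p : MvPolynomial σ R}
    (hp : p ∈ invariants R (G ⊓ MulAction.stabilizerSubmonoid _ x)) {g : Equiv.Perm σ}
    (hg : g ∈ G) {a : σ} (ha : Equiv.swap x a ∈ G) (hga : Equiv.swap x (g a) ∈ G) :
    rename g (rename (Equiv.swap x a) p) = rename (Equiv.swap x (g a)) p := by
  set τ := Equiv.swap x (g a) * g * Equiv.swap x a
  have hτ : τ ∈ G ⊓ MulAction.stabilizerSubmonoid _ x := by
    refine ⟨G.mul_mem (G.mul_mem hga hg) ha, ?_⟩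
    simp [τ, MulAction.mem_stabilizerSubmonoid_iff, Equiv.Perm.smul_def]
  conv_rhs => rw [← hp τ hτ]
  rw [rename_rename, rename_rename]
  congr 1
  ext y
  simp [τ]

theorem exists_mem_invariants_vandermonde_mulVec_eq {K : Type*} [Field K] [CharZero K]
    {v : Fin d → σ} (hv : Function.Injective v)
    (hperm : ∀ g ∈ G, ∃ π : Equiv.Perm (Fin d), ∀ r, v (π r) = g (v r))
    (hswap : ∀ r s, Equiv.swap (v r) (v s) ∈ G) {b : Fin d → MvPolynomial σ K}
    (hb : ∀ g ∈ G, ∀ π : Equiv.Perm (Fin d), (∀ r, v (π r) = g (v r)) →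
      ∀ r, rename g (b r) = b (π r)) :
    ∃ c : Fin d → MvPolynomial σ K, (∀ m, c m ∈ invariants K G) ∧
      (Matrix.vandermonde fun r => (X (v r) : MvPolynomial σ K)).mulVec c = b := by
  set V := Matrix.vandermonde fun r => (X (v r) : MvPolynomial σ K)
  have hdet : V.det ≠ 0 := Matrix.det_vandermonde_ne_zero_iff.mpr (X_injective.comp hv)
  -- a transposition of two of the variables `v r` changes the sign of each Cramer numerator
  have hdvd (m : Fin d) : V.det ∣ V.cramer b m := by
    refine det_vandermonde_X_dvd hv fun r s hrs => ?_
    have hπ (t : Fin d) : v (Equiv.swap r s t) = Equiv.swap (v r) (v s) (v t) :=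
      (hv.swap_apply r s t).symm
    have := rename_cramer_vandermonde_X hπ (hb _ (hswap r s) _ hπ) m
    simpa [Equiv.Perm.sign_swap hrs.ne] using this
  choose c hc using hdvd
  refine ⟨c, fun m g hg => ?_, ?_⟩
  · obtain ⟨π, hπ⟩ := hperm g hg
    have h := rename_cramer_vandermonde_X hπ (hb g hg π hπ) m
    rw [hc m, map_mul, rename_det_vandermonde_X hπ, mul_assoc] at h
    exact mul_left_cancel₀ hdet (mul_left_cancel₀ (Int.cast_ne_zero.mpr (Units.ne_zero _)) h)
  · funext r
    refine mul_left_cancel₀ hdet ?_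
    have hcramer : V.cramer b = V.det • c := _root_.funext hc
    have := congrFun (Matrix.mulVec_cramer V b) r
    rwa [hcramer, Matrix.mulVec_smul, Pi.smul_apply, Pi.smul_apply, smul_eq_mul,
      smul_eq_mul] at this

theorem exists_eq_sum_X_pow_of_mem_invariants {K : Type*} [Field K] [CharZero K] (hx : x ∈ Ω)
    (hd : #Ω = d) (hswap : ∀ a ∈ Ω, ∀ b ∈ Ω, Equiv.swap a b ∈ G)
    (hmaps : ∀ g ∈ G, ∀ a ∈ Ω, g a ∈ Ω) {p : MvPolynomial σ K}
    (hp : p ∈ invariants K (G ⊓ MulAction.stabilizerSubmonoid _ x)) :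
    ∃ c : Fin d → MvPolynomial σ K,
      (∀ m, c m ∈ invariants K G) ∧ p = ∑ m, c m * X x ^ (m : ℕ) := by
  let e := Ω.equivFinOfCardEq hd
  let v : Fin d → σ := fun r => e.symm r
  have hv : Function.Injective v := Subtype.val_injective.comp e.symm.injective
  have hvΩ (r : Fin d) : v r ∈ Ω := (e.symm r).2
  have hvx : v (e ⟨x, hx⟩) = x := by simp [v]
  obtain ⟨c, hc, hV⟩ := exists_mem_invariants_vandermonde_mulVec_eq hv
    (fun g hg => hv.exists_perm_apply_eq g.injective fun r =>
      ⟨e ⟨g (v r), hmaps g hg _ (hvΩ r)⟩, by simp [v]⟩)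
    (fun r s => hswap _ (hvΩ r) _ (hvΩ s))
    (b := fun r => rename (Equiv.swap x (v r)) p) fun g hg π hπ r => by
      simp only [hπ]
      exact rename_rename_swap_of_mem_invariants hp hg (hswap x hx _ (hvΩ r))
        (hswap x hx _ (hπ r ▸ hvΩ (π r)))
  refine ⟨c, hc, ?_⟩
  have := congrFun hV (e ⟨x, hx⟩)
  simp only [hvx, Equiv.swap_self, Equiv.coe_refl, rename_id_apply] at this
  rw [← this, Matrix.mulVec, dotProduct]
  exact Finset.sum_congr rfl fun m _ => by rw [Matrix.vandermonde_apply, hvx, mul_comm]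

theorem span_X_pow_eq_invariants {K : Type*} [Field K] [CharZero K] (hx : x ∈ Ω)
    (hd : #Ω = d) (hswap : ∀ a ∈ Ω, ∀ b ∈ Ω, Equiv.swap a b ∈ G)
    (hmaps : ∀ g ∈ G, ∀ a ∈ Ω, g a ∈ Ω) :
    (Submodule.span (invariants K G)
        (Set.range fun m : Fin d => (X x : MvPolynomial σ K) ^ (m : ℕ)) : Set (MvPolynomial σ K)) =
      invariants K (G ⊓ MulAction.stabilizerSubmonoid _ x) := by
  set A := invariants K (G ⊓ MulAction.stabilizerSubmonoid _ x)
  refine subset_antisymm (fun q hq => ?_) fun p hp => ?_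
  · induction hq using Submodule.span_induction with
    | mem _ h =>
      obtain ⟨m, rfl⟩ := h
      intro g hg
      rw [map_pow, rename_X, ← Equiv.Perm.smul_def, MulAction.mem_stabilizerSubmonoid_iff.mp hg.2]
    | zero => exact A.zero_mem
    | add _ _ _ _ hp hq => exact A.add_mem hp hq
    | smul b _ _ hq => exact A.mul_mem (invariants_antitone inf_le_left b.2) hq
  · obtain ⟨c, hc, rfl⟩ := exists_eq_sum_X_pow_of_mem_invariants hx hd hswap hmaps hp
    exact Submodule.sum_mem _ fun m _ =>
      Submodule.smul_mem _ (⟨c m, hc m⟩ : invariants K G) (Submodule.subset_span ⟨m, rfl⟩)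

end Invariants

end MvPolynomial

section YoungSubmonoid

variable {n N}

theorem kpart_eq_sum_ite (ν : Fin n → ℕ) (t : ℕ) :
    kpart n ν t = ∑ j : Fin n, if (j : ℕ) < t then ν j else 0 := by
  rw [kpart, Finset.sum_filter]

theorem kpart_mono (ν : Fin n → ℕ) : Monotone (kpart n ν) := fun s t h => by
  rw [kpart_eq_sum_ite, kpart_eq_sum_ite]
  exact Finset.sum_le_sum fun j _ => by split_ifs <;> omega

theorem kpart_le_sum (ν : Fin n → ℕ) (t : ℕ) : kpart n ν t ≤ ∑ a, ν a :=
  Finset.sum_le_sum_of_subset (Finset.filter_subset _ _)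

theorem kpart_succ (ν : Fin n → ℕ) (t : Fin n) : kpart n ν (t + 1) = kpart n ν t + ν t := by
  have hν : ν t = ∑ j : Fin n, if (j : ℕ) = t then ν j else 0 := by
    rw [Finset.sum_eq_single_of_mem t (Finset.mem_univ _) fun j _ hj => if_neg fun h' =>
      hj (Fin.ext h'), if_pos rfl]
  rw [kpart_eq_sum_ite, kpart_eq_sum_ite, hν, ← Finset.sum_add_distrib]
  exact Finset.sum_congr rfl fun j _ => by split_ifs <;> omega

theorem kpart_subAlpha_add_ite (ν : Fin n → ℕ) {i i' : Fin n} (hii' : (i' : ℕ) = i + 1)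
    (hpos : 0 < ν i) (t : ℕ) :
    kpart n (subAlpha n ν i i') t + (if (i : ℕ) < t then 1 else 0) =
      kpart n ν t + if (i : ℕ) + 1 < t then 1 else 0 := by
  have hind (a : Fin n) (P : Prop) [Decidable P] :
      (if P then 1 else 0) = ∑ j : Fin n, if j = a then (if P then 1 else 0) else 0 := by simp
  rw [kpart_eq_sum_ite, kpart_eq_sum_ite, hind i ((i : ℕ) < t), hind i' ((i : ℕ) + 1 < t),
    ← Finset.sum_add_distrib, ← Finset.sum_add_distrib]
  refine Finset.sum_congr rfl fun j _ => ?_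
  have hne : i ≠ i' := fun h => by rw [Fin.ext_iff] at h; omega
  rcases eq_or_ne j i with rfl | hji
  · simp only [subAlpha, Function.update_of_ne hne, Function.update_self, if_neg hne]
    split_ifs <;> omega
  rcases eq_or_ne j i' with rfl | hji'
  · simp only [subAlpha, Function.update_self, if_neg hji]
    split_ifs <;> omega
  · simp [subAlpha, hji, hji']

theorem kpart_subAlpha (ν : Fin n → ℕ) {i i' : Fin n} (hii' : (i' : ℕ) = i + 1)
    (hpos : 0 < ν i) :
    kpart n (subAlpha n ν i i') =
      Function.update (kpart n ν) ((i : ℕ) + 1) (kpart n ν ((i : ℕ) + 1) - 1) := by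
  funext t
  have h := kpart_subAlpha_add_ite ν hii' hpos t
  rcases eq_or_ne t ((i : ℕ) + 1) with rfl | ht
  · rw [Function.update_self]
    split_ifs at h <;> omega
  · rw [Function.update_of_ne ht]
    split_ifs at h <;> omega

theorem kpart_refineMinus_add_ite (ν : Fin n → ℕ) (i : Fin n) (hpos : 0 < ν i) (t : ℕ) :
    kpart (n + 1) (refineMinus n ν i) t + (if (i : ℕ) < t then 1 else 0) =
      kpart n ν (if t ≤ (i : ℕ) + 1 then t else t - 1) + if (i : ℕ) + 1 < t then 1 else 0 := by
  have hind : (if (i : ℕ) < t then 1 else 0) =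
      ∑ j : Fin n, if j = i then (if (i : ℕ) < t then 1 else 0) else 0 := by simp
  rw [kpart_eq_sum_ite, kpart_eq_sum_ite, Fin.sum_univ_succAbove _ ⟨(i : ℕ) + 1, by omega⟩,
    refineMinus, Fin.insertNth_apply_same, hind, add_assoc, ← Finset.sum_add_distrib, add_comm]
  congr 1
  refine Finset.sum_congr rfl fun j _ => ?_
  simp only [Fin.insertNth_apply_succAbove]
  rcases eq_or_ne j i with rfl | hji
  · rw [Fin.succAbove_of_castSucc_lt _ _ (by simp [Fin.lt_def]), Fin.val_castSucc,
      Function.update_self]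
    split_ifs <;> omega
  · have hji' : (j : ℕ) ≠ i := fun h => hji (Fin.ext h)
    rw [Function.update_of_ne hji, if_neg hji, add_zero]
    by_cases hj : (j : ℕ) < (i : ℕ) + 1
    · rw [Fin.succAbove_of_castSucc_lt _ _ (by simpa [Fin.lt_def] using hj), Fin.val_castSucc]
      split_ifs <;> omega
    · rw [Fin.succAbove_of_le_castSucc _ _ (by simp [Fin.le_def]; omega), Fin.val_succ]
      split_ifs <;> omega

theorem range_kpart_refineMinus (ν : Fin n → ℕ) (i : Fin n) (hpos : 0 < ν i) :
    Set.range (kpart (n + 1) (refineMinus n ν i)) =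
      insert (kpart n ν ((i : ℕ) + 1) - 1) (Set.range (kpart n ν)) := by
  have h := kpart_refineMinus_add_ite ν i hpos
  ext c
  simp only [Set.mem_insert_iff, Set.mem_range]
  constructor
  · rintro ⟨t, rfl⟩
    have ht := h t
    rcases lt_trichotomy t ((i : ℕ) + 1) with hlt | rfl | hgt
    · exact Or.inr ⟨t, by split_ifs at ht <;> omega⟩
    · exact Or.inl (by split_ifs at ht <;> omega)
    · exact Or.inr ⟨t - 1, by split_ifs at ht <;> omega⟩
  · rintro (rfl | ⟨t, rfl⟩)
    · have ht := h ((i : ℕ) + 1)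
      exact ⟨(i : ℕ) + 1, by split_ifs at ht <;> omega⟩
    · by_cases hti : t ≤ i
      · have ht := h t
        exact ⟨t, by split_ifs at ht <;> omega⟩
      · have ht := h (t + 1)
        rw [Nat.add_sub_cancel] at ht
        exact ⟨t + 1, by split_ifs at ht <;> omega⟩

theorem kpart_eq_sum_of_le (ν : Fin n → ℕ) {t : ℕ} (h : n ≤ t) : kpart n ν t = ∑ a, ν a := by
  rw [kpart_eq_sum_ite]
  exact Finset.sum_congr rfl fun j _ => if_pos (j.isLt.trans_le h)

theorem mem_blockOf {ν : Fin n → ℕ} {j : Fin n} {a : Fin N} :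
    a ∈ blockOf n N ν j ↔ kpart n ν j ≤ a ∧ (a : ℕ) < kpart n ν (j + 1) := by
  simp [blockOf]

theorem exists_mem_blockOf_of_lt_kpart {ν : Fin n → ℕ} {a : Fin N} {t : ℕ}
    (h : (a : ℕ) < kpart n ν t) : ∃ j : Fin n, (j : ℕ) < t ∧ a ∈ blockOf n N ν j := by
  induction t with
  | zero => simp [kpart] at h
  | succ t ih =>
    by_cases ha : (a : ℕ) < kpart n ν t
    · obtain ⟨j, hjt, haj⟩ := ih ha
      exact ⟨j, hjt.trans (Nat.lt_succ_self t), haj⟩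
    have ht : t < n := by
      by_contra ht
      rw [kpart_eq_sum_of_le ν (by omega), ← kpart_eq_sum_of_le ν (not_lt.mp ht)] at h
      exact ha h
    exact ⟨⟨t, ht⟩, Nat.lt_succ_self t, mem_blockOf.mpr ⟨not_lt.mp ha, h⟩⟩

theorem eq_of_mem_blockOf {ν : Fin n → ℕ} {j j' : Fin n} {a : Fin N}
    (h : a ∈ blockOf n N ν j) (h' : a ∈ blockOf n N ν j') : j = j' := by
  rw [mem_blockOf] at h h'
  by_contra hne
  rcases lt_or_gt_of_ne (Fin.val_ne_of_ne hne) with hlt | hlt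
  · have := kpart_mono ν (show (j : ℕ) + 1 ≤ j' from hlt)
    omega
  · have := kpart_mono ν (show (j' : ℕ) + 1 ≤ j from hlt)
    omega

theorem card_blockOf {ν : Fin n → ℕ} (j : Fin n) (hle : kpart n ν (j + 1) ≤ N) :
    #(blockOf n N ν j) = ν j := by
  have himage : (blockOf n N ν j).image Fin.val = Finset.Ico (kpart n ν j) (kpart n ν (j + 1)) := by
    ext m
    simp only [Finset.mem_image, Finset.mem_Ico, mem_blockOf]
    exact ⟨fun ⟨a, ha, hm⟩ => hm ▸ ha, fun hm => ⟨⟨m, by omega⟩, hm, rfl⟩⟩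
  rw [← Finset.card_image_of_injective _ Fin.val_injective, himage, Nat.card_Ico,
    kpart_succ ν j]
  omega

variable (n N) in
/-- The Young subgroup `S_ν`. -/
def youngSubmonoid (ν : Fin n → ℕ) : Submonoid (Equiv.Perm (Fin N)) where
  carrier := {g | BlockPreserving n N ν g}
  one_mem' _ _ ha := ha
  mul_mem' hg hh j a ha := hg j _ (hh j a ha)

theorem mem_youngSubmonoid {ν : Fin n → ℕ} {g : Equiv.Perm (Fin N)} :
    g ∈ youngSubmonoid n N ν ↔ BlockPreserving n N ν g :=
  Iff.rfl

theorem Psub_eq_invariants (ν : Fin n → ℕ) : Psub n N ν = invariants ℂ (youngSubmonoid n N ν) :=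
  rfl

theorem swap_mem_youngSubmonoid {ν : Fin n → ℕ} {j : Fin n} {a b : Fin N}
    (ha : a ∈ blockOf n N ν j) (hb : b ∈ blockOf n N ν j) :
    Equiv.swap a b ∈ youngSubmonoid n N ν := by
  rw [mem_youngSubmonoid]
  intro k c hc
  rcases eq_or_ne c a with rfl | hca
  · rwa [Equiv.swap_apply_left, eq_of_mem_blockOf hc ha]
  rcases eq_or_ne c b with rfl | hcb
  · rwa [Equiv.swap_apply_right, eq_of_mem_blockOf hc hb]
  rwa [Equiv.swap_apply_of_ne_of_ne hca hcb]

def PreservesBelow (g : Equiv.Perm (Fin N)) (c : ℕ) : Prop :=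
  ∀ a : Fin N, (g a : ℕ) < c ↔ (a : ℕ) < c

theorem preservesBelow_of_lt {g : Equiv.Perm (Fin N)} {c : ℕ}
    (h : ∀ a : Fin N, (a : ℕ) < c → (g a : ℕ) < c) : PreservesBelow g c := fun a => by
  simpa using Equiv.Perm.apply_mem_iff_of_mapsTo
    (s := Finset.univ.filter fun a : Fin N => (a : ℕ) < c) (by simpa using h) a

theorem PreservesBelow.apply_eq {g : Equiv.Perm (Fin N)} {a : Fin N} (h : PreservesBelow g a)
    (h₁ : PreservesBelow g (a + 1)) : g a = a := by
  have := (h₁ a).mpr (Nat.lt_succ_self _)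
  have := (h a).not.mpr (lt_irrefl _)
  exact Fin.ext (by omega)

theorem preservesBelow_succ_iff_of_apply_eq {g : Equiv.Perm (Fin N)} {a : Fin N}
    (hfix : g a = a) : PreservesBelow g (a + 1) ↔ PreservesBelow g a := by
  have hb (b : Fin N) : (g b : ℕ) = a ↔ (b : ℕ) = a := by
    rw [← Fin.ext_iff, ← Fin.ext_iff]
    nth_rewrite 1 [← hfix]
    exact g.injective.eq_iff
  refine ⟨fun h b => ?_, fun h b => ?_⟩ <;> have := h b <;> have := hb b <;> omega

theorem blockPreserving_iff {ν : Fin n → ℕ} {g : Equiv.Perm (Fin N)} :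
    BlockPreserving n N ν g ↔ ∀ c ∈ Set.range (kpart n ν), PreservesBelow g c := by
  rw [Set.forall_mem_range]
  refine ⟨fun hg t => preservesBelow_of_lt fun a ha => ?_, fun hg j a ha => ?_⟩
  · obtain ⟨j, hjt, haj⟩ := exists_mem_blockOf_of_lt_kpart ha
    exact (mem_blockOf.mp (hg j a haj)).2.trans_le (kpart_mono ν hjt)
  · have := hg j a
    have := hg (j + 1) a
    rw [mem_blockOf] at ha ⊢
    omega

theorem val_varF [NeZero N] {ν : Fin n → ℕ} {i : Fin n} (hν : ∑ a, ν a = N) (hpos : 0 < ν i) :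
    (varF n N ν i : ℕ) + 1 = kpart n ν (i + 1) := by
  have := kpart_le_sum ν ((i : ℕ) + 1)
  have := kpart_succ ν i
  have hlt : kpart n ν ((i : ℕ) + 1) - 1 < N := by omega
  rw [varF, Fin.val_cast_of_lt hlt]
  omega

theorem youngSubmonoid_refineMinus [NeZero N] {ν : Fin n → ℕ} {i : Fin n}
    (hν : ∑ a, ν a = N) (hpos : 0 < ν i) :
    youngSubmonoid (n + 1) N (refineMinus n ν i) =
      youngSubmonoid n N ν ⊓ MulAction.stabilizerSubmonoid _ (varF n N ν i) := by
  have hx := val_varF hν hpos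
  ext g
  rw [Submonoid.mem_inf, MulAction.mem_stabilizerSubmonoid_iff, Equiv.Perm.smul_def,
    mem_youngSubmonoid, mem_youngSubmonoid, blockPreserving_iff, blockPreserving_iff,
    range_kpart_refineMinus ν i hpos, Set.forall_mem_insert, ← hx, Nat.add_sub_cancel]
  constructor
  · rintro ⟨hxg, hg⟩
    exact ⟨hg, hxg.apply_eq (hg _ ⟨_, hx.symm⟩)⟩
  · rintro ⟨hg, hfix⟩
    exact ⟨(preservesBelow_succ_iff_of_apply_eq hfix).mp (hg _ ⟨_, hx.symm⟩), hg⟩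

theorem youngSubmonoid_refineMinus_eq_subAlpha [NeZero N] {ν : Fin n → ℕ} {i : Fin n}
    (hi : (i : ℕ) + 1 < n) (hν : ∑ a, ν a = N) (hpos : 0 < ν i) :
    youngSubmonoid (n + 1) N (refineMinus n ν i) =
      youngSubmonoid n N (subAlpha n ν i ⟨i + 1, hi⟩) ⊓
        MulAction.stabilizerSubmonoid _ (varF n N ν i) := by
  have hx := val_varF hν hpos
  have hsub := kpart_subAlpha ν (i' := ⟨i + 1, hi⟩) rfl hpos
  have hxsub : kpart n (subAlpha n ν i ⟨i + 1, hi⟩) ((i : ℕ) + 1) = varF n N ν i := by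
    rw [hsub, Function.update_self]
    omega
  ext g
  rw [Submonoid.mem_inf, MulAction.mem_stabilizerSubmonoid_iff, Equiv.Perm.smul_def,
    mem_youngSubmonoid, mem_youngSubmonoid, blockPreserving_iff, blockPreserving_iff,
    range_kpart_refineMinus ν i hpos, ← Set.insert_range_update, ← hsub,
    Set.forall_mem_insert, ← hx]
  constructor
  · rintro ⟨hxg, hg⟩
    exact ⟨hg, (hg _ ⟨_, hxsub⟩).apply_eq hxg⟩
  · rintro ⟨hg, hfix⟩
    exact ⟨(preservesBelow_succ_iff_of_apply_eq hfix).mpr (hg _ ⟨_, hxsub⟩), hg⟩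

theorem linearIndependent_X_pow_and_span_eq_of_mem_blockOf {μ : Fin n → ℕ} {j : Fin n}
    {x : Fin N} {d : ℕ} (hx : x ∈ blockOf n N μ j) (hd : #(blockOf n N μ j) = d) :
    LinearIndependent (Psub n N μ) (fun m : Fin d => (X x : MvPolynomial (Fin N) ℂ) ^ (m : ℕ)) ∧
      (Submodule.span (Psub n N μ)
          (Set.range fun m : Fin d => (X x : MvPolynomial (Fin N) ℂ) ^ (m : ℕ)) :
          Set (MvPolynomial (Fin N) ℂ)) =
        invariants ℂ (youngSubmonoid n N μ ⊓ MulAction.stabilizerSubmonoid _ x) := by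
  have hswap (a) (ha : a ∈ blockOf n N μ j) (b) (hb : b ∈ blockOf n N μ j) :=
    swap_mem_youngSubmonoid ha hb
  exact ⟨linearIndependent_X_pow hx hd hswap,
    span_X_pow_eq_invariants hx hd hswap fun g hg a ha => hg j a ha⟩

end YoungSubmonoid

theorem P_refined_free [NeZero N]
    (ν : Fin n → ℕ) (hν : (∑ a, ν a) = N)
    (i : Fin n) (hi : (i : ℕ) + 1 < n) (hpos : 0 < ν i) :
    (LinearIndependent (Psub n N ν)
        (fun m : Fin (ν i) => (X (varF n N ν i) : MvPolynomial (Fin N) ℂ) ^ (m : ℕ)) ∧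
      (Submodule.span (Psub n N ν)
          (Set.range fun m : Fin (ν i) =>
            (X (varF n N ν i) : MvPolynomial (Fin N) ℂ) ^ (m : ℕ)) : Set (MvPolynomial (Fin N) ℂ)) =
        (Psub (n + 1) N (refineMinus n ν i) : Set (MvPolynomial (Fin N) ℂ))) ∧
    (LinearIndependent (Psub n N (subAlpha n ν i ⟨(i : ℕ) + 1, hi⟩))
        (fun m : Fin (ν ⟨(i : ℕ) + 1, hi⟩ + 1) =>
          (X (varF n N ν i) : MvPolynomial (Fin N) ℂ) ^ (m : ℕ)) ∧
      (Submodule.span (Psub n N (subAlpha n ν i ⟨(i : ℕ) + 1, hi⟩))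
          (Set.range fun m : Fin (ν ⟨(i : ℕ) + 1, hi⟩ + 1) =>
            (X (varF n N ν i) : MvPolynomial (Fin N) ℂ) ^ (m : ℕ)) : Set (MvPolynomial (Fin N) ℂ)) =
        (Psub (n + 1) N (refineMinus n ν i) : Set (MvPolynomial (Fin N) ℂ))) := by
  set i' : Fin n := ⟨i + 1, hi⟩
  have hi' : (i' : ℕ) = i + 1 := rfl
  have hx := val_varF hν hpos
  have hsub := kpart_subAlpha ν hi' hpos
  have hsub_succ : kpart n (subAlpha n ν i i') (i' + 1) = kpart n ν (i + 1 + 1) := by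
    rw [hi', hsub, Function.update_of_ne (by omega)]
  have hx₁ : varF n N ν i ∈ blockOf n N ν i := by
    have := kpart_succ ν i
    rw [mem_blockOf]
    omega
  have hx₂ : varF n N ν i ∈ blockOf n N (subAlpha n ν i i') i' := by
    have := kpart_mono ν (show (i : ℕ) + 1 ≤ i + 1 + 1 by omega)
    rw [mem_blockOf, hsub_succ, hi', hsub, Function.update_self]
    omega
  have hcard₁ : #(blockOf n N ν i) = ν i := card_blockOf i (hν ▸ kpart_le_sum ν _)
  have hcard₂ : #(blockOf n N (subAlpha n ν i i') i') = ν i' + 1 := by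
    rw [card_blockOf i' (hsub_succ ▸ hν ▸ kpart_le_sum ν _)]
    simp [subAlpha]
  obtain ⟨hli₁, hspan₁⟩ := linearIndependent_X_pow_and_span_eq_of_mem_blockOf hx₁ hcard₁
  obtain ⟨hli₂, hspan₂⟩ := linearIndependent_X_pow_and_span_eq_of_mem_blockOf hx₂ hcard₂
  rw [Psub_eq_invariants (refineMinus n ν i)]
  rw [← youngSubmonoid_refineMinus hν hpos] at hspan₁
  rw [← youngSubmonoid_refineMinus_eq_subAlpha hi hν hpos] at hspan₂
  exact ⟨⟨hli₁, hspan₁⟩, hli₂, hspan₂⟩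

end
end
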